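/- arXiv:2505.07046 — 3 statements merged into one kernel-verified Lean document; each statement's English description precedes it below -/
import Mathlib

section
/- Let d, s be positive natural numbers, let P be a real d×s matrix, let λ > 0, and let Π = P (Pᵀ P + λ I_s)⁻¹ Pᵀ (an d×d matrix; Pᵀ P + λ I_s is invertible since it is positive definite). Then for every symmetric positive semidefinite d×d real matrix Σ, the trace of Π Σ Πᵀ is at most the trace of Σ. -/
open Matrix

lemma trace_nonneg_of_posSemidef {n : ℕ} {A : Matrix (Fin n) (Fin n) ℝ}
    (hA : A.PosSemidef) : 0 ≤ A.trace := by
  apply Finset.sum_nonneg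
  intro i _
  have := hA.dotProduct_mulVec_nonneg (Pi.single i 1)
  simpa [dotProduct, mulVec, Pi.single_apply] using this

open scoped MatrixOrder in
lemma trace_mul_nonneg_of_posSemidef {n : ℕ} {A B : Matrix (Fin n) (Fin n) ℝ}
    (hA : A.PosSemidef) (hB : B.PosSemidef) : 0 ≤ (A * B).trace := by
  have hS : CFC.sqrt A * CFC.sqrt A = A := CFC.sqrt_mul_sqrt_self A hA.nonneg
  have h1 : (A * B).trace = (CFC.sqrt A * B * CFC.sqrt A).trace := by
    conv_lhs => rw [← hS, Matrix.mul_assoc, trace_mul_comm]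
  rw [h1]
  have : (CFC.sqrt A * B * (CFC.sqrt A)ᴴ).PosSemidef := hB.mul_mul_conjTranspose_same (CFC.sqrt A)
  rw [(CFC.sqrt_nonneg A).posSemidef.isHermitian.eq] at this
  exact trace_nonneg_of_posSemidef this

lemma posSemidef_smul_real {n : ℕ} {A : Matrix (Fin n) (Fin n) ℝ}
    (hA : A.PosSemidef) {c : ℝ} (hc : 0 ≤ c) : (c • A).PosSemidef := by
  refine ⟨?_, fun x => ?_⟩
  · unfold Matrix.IsHermitian
    rw [conjTranspose_smul, hA.1.eq]
    simp
  · exact (hA.smul hc).2 x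

/-- Variance reduction (Theorem 4.1): with `Π = P (PᵀP + λI)⁻¹ Pᵀ`,
`tr(Π Σ Πᵀ) ≤ tr(Σ)` for every symmetric PSD `Σ`. -/
theorem trace_proj_cov_le
    (d s : ℕ) (hd : 0 < d) (hs : 0 < s)
    (P : Matrix (Fin d) (Fin s) ℝ) (lam : ℝ) (hlam : 0 < lam)
    (Proj : Matrix (Fin d) (Fin d) ℝ)
    (hProj : Proj = P * (Pᵀ * P + lam • (1 : Matrix (Fin s) (Fin s) ℝ))⁻¹ * Pᵀ)
    (Sig : Matrix (Fin d) (Fin d) ℝ)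
    (hSymm : Sig.IsSymm) (hPSD : Sig.PosSemidef) :
    (Proj * Sig * Projᵀ).trace ≤ Sig.trace := by
  set M : Matrix (Fin s) (Fin s) ℝ := Pᵀ * P + lam • 1 with hM
  set A : Matrix (Fin d) (Fin d) ℝ := P * Pᵀ with hA
  set N : Matrix (Fin d) (Fin d) ℝ := A + lam • 1 with hN
  -- basic PSD facts
  have hPT : Pᴴ = Pᵀ := conjTranspose_eq_transpose_of_trivial P
  have hApsd : A.PosSemidef := by
    have := posSemidef_self_mul_conjTranspose P
    rwa [hPT] at this
  have hlamI_d : (lam • (1 : Matrix (Fin d) (Fin d) ℝ)).PosDef := by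
    rw [smul_one_eq_diagonal]
    exact posDef_diagonal_iff.mpr fun i => hlam
  have hlamI_s : (lam • (1 : Matrix (Fin s) (Fin s) ℝ)).PosDef := by
    rw [smul_one_eq_diagonal]
    exact posDef_diagonal_iff.mpr fun i => hlam
  have hMpsd : (Pᵀ * P).PosSemidef := by
    have := posSemidef_conjTranspose_mul_self P
    rwa [hPT] at this
  have hMpd : M.PosDef := Matrix.PosDef.posSemidef_add hMpsd hlamI_s
  have hNpd : N.PosDef := Matrix.PosDef.posSemidef_add hApsd hlamI_d
  have hMM : M⁻¹ * M = 1 := nonsing_inv_mul M hMpd.det_pos.ne'.isUnit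
  have hNN : N * N⁻¹ = 1 := mul_nonsing_inv N hNpd.det_pos.ne'.isUnit
  have hNN' : N⁻¹ * N = 1 := nonsing_inv_mul N hNpd.det_pos.ne'.isUnit
  set Q : Matrix (Fin d) (Fin d) ℝ := N⁻¹ with hQ
  have hQpd : Q.PosDef := hNpd.inv
  have hQsym : Qᵀ = Q := by
    rw [hQ, transpose_nonsing_inv]
    congr 1
    have := hNpd.isHermitian.eq
    rwa [conjTranspose_eq_transpose_of_trivial] at this
  -- Proj * N = A
  have hPN : Pᵀ * N = M * Pᵀ := by
    rw [hN, hA, hM]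
    simp [Matrix.mul_add, Matrix.add_mul, Matrix.mul_smul, Matrix.smul_mul, Matrix.mul_assoc]
  have hProjN : Proj * N = A := by
    rw [hProj, Matrix.mul_assoc, Matrix.mul_assoc, hPN, ← Matrix.mul_assoc M⁻¹, hMM, Matrix.one_mul]
  -- Proj = A * Q
  have hProjAQ : Proj = A * Q := by
    have : Proj * N * Q = A * Q := by rw [hProjN]
    rwa [Matrix.mul_assoc, hNN, mul_one] at this
  -- N commutes with A
  have hNA : N * A = A * N := by
    rw [hN]
    simp [Matrix.add_mul, Matrix.mul_add, Matrix.smul_mul, Matrix.mul_smul]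
  have hNProj : N * Proj = A := by
    rw [hProjAQ, ← Matrix.mul_assoc, hNA, Matrix.mul_assoc, hNN, mul_one]
  -- the key identity
  have hkey : (1 : Matrix (Fin d) (Fin d) ℝ) - Proj * Proj = Q * (N * N - A * A) * Q := by
    have h1 : N * ((1 : Matrix (Fin d) (Fin d) ℝ) - Proj * Proj) * N = N * N - A * A := by
      rw [Matrix.mul_sub, Matrix.sub_mul, mul_one]
      congr 1
      calc N * (Proj * Proj) * N = (N * Proj) * (Proj * N) := by
            rw [Matrix.mul_assoc, Matrix.mul_assoc, Matrix.mul_assoc]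
        _ = A * A := by rw [hNProj, hProjN]
    calc (1 : Matrix (Fin d) (Fin d) ℝ) - Proj * Proj
        = (Q * N) * ((1 - Proj * Proj) * (N * Q)) := by rw [hNN', hNN, Matrix.one_mul, Matrix.mul_one]
      _ = Q * (N * (1 - Proj * Proj) * N) * Q := by simp only [Matrix.mul_assoc]
      _ = Q * (N * N - A * A) * Q := by rw [h1]
  -- N*N - A*A is PSD
  have hX : N * N - A * A = lam • (A + A + lam • 1) := by
    rw [hN]
    simp only [Matrix.add_mul, Matrix.mul_add, Matrix.smul_mul, Matrix.mul_smul, one_mul,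
      mul_one, smul_smul, smul_add]
    abel
  have hXpsd : (N * N - A * A).PosSemidef := by
    rw [hX]
    exact posSemidef_smul_real ((hApsd.add hApsd).add hlamI_d.posSemidef) hlam.le
  have hkeyPSD : ((1 : Matrix (Fin d) (Fin d) ℝ) - Proj * Proj).PosSemidef := by
    rw [hkey]
    have := hXpsd.mul_mul_conjTranspose_same Q
    rwa [conjTranspose_eq_transpose_of_trivial, hQsym] at this
  -- Proj is symmetric
  have hProjT : Projᵀ = Proj := by
    have hAT : Aᵀ = A := by
      have := hApsd.isHermitian.eq
      rwa [conjTranspose_eq_transpose_of_trivial] at this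
    have hcomm : A * Q = Q * A := by
      calc A * Q = Q * (N * (A * Q)) := by rw [← Matrix.mul_assoc, hNN', one_mul]
        _ = Q * (A * (N * Q)) := by rw [← Matrix.mul_assoc N, hNA, Matrix.mul_assoc]
        _ = Q * A := by rw [hNN, mul_one]
    rw [hProjAQ, transpose_mul, hQsym, hAT, hcomm]
  -- conclude
  rw [hProjT]
  have htr : (Proj * Sig * Proj).trace = (Proj * Proj * Sig).trace := by
    rw [trace_mul_cycle]
  have hsub : Sig.trace - (Proj * Proj * Sig).trace
      = (((1 : Matrix (Fin d) (Fin d) ℝ) - Proj * Proj) * Sig).trace := by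
    rw [Matrix.sub_mul, one_mul, trace_sub]
  have hnn : 0 ≤ (((1 : Matrix (Fin d) (Fin d) ℝ) - Proj * Proj) * Sig).trace :=
    trace_mul_nonneg_of_posSemidef hkeyPSD hPSD
  rw [htr]
  linarith
end

section
/- Let s be a positive natural number, let G = D + L + Lᵀ be a symmetric real s×s matrix, where D is the diagonal part of G and L is the strictly lower-triangular part, and assume D + L is invertible. Let b ∈ ℝ^s be nonzero and let α⁽¹⁾ = (D + L)⁻¹ b. Then the backward error η(α⁽¹⁾) := ‖b − G α⁽¹⁾‖₂ / (‖G‖₂ · ‖α⁽¹⁾‖₂ + ‖b‖₂) satisfies η(α⁽¹⁾) ≤ ‖Lᵀ (D + L)⁻¹‖₂. -/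
open Matrix

/-- The operator 2-norm of a real matrix: the norm of the induced linear map
between Euclidean spaces. -/
noncomputable def l2OpNorm {m n : ℕ} (M : Matrix (Fin m) (Fin n) ℝ) : ℝ :=
  ‖LinearMap.toContinuousLinearMap (Matrix.toEuclideanLin M)‖

lemma sqrt_sum_sq_eq_norm {s : ℕ} (x : Fin s → ℝ) :
    Real.sqrt (∑ i, x i ^ 2) = ‖(WithLp.equiv 2 (Fin s → ℝ)).symm x‖ := by
  rw [EuclideanSpace.norm_eq]
  simp [sq_abs]

lemma mulVec_norm_le {s t : ℕ} (M : Matrix (Fin s) (Fin t) ℝ) (x : Fin t → ℝ) :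
    ‖(WithLp.equiv 2 (Fin s → ℝ)).symm (M.mulVec x)‖ ≤
      l2OpNorm M * ‖(WithLp.equiv 2 (Fin t → ℝ)).symm x‖ := by
  have := (LinearMap.toContinuousLinearMap (Matrix.toEuclideanLin M)).le_opNorm
    ((WithLp.equiv 2 (Fin t → ℝ)).symm x)
  simpa [l2OpNorm, Matrix.toEuclideanLin_apply_piLp_toLp] using this

/-- Backward-error bound for one forward Gauss–Seidel sweep from zero on the
symmetric system `G α = b`, `G = D + L + Lᵀ`, with `α⁽¹⁾ = (D + L)⁻¹ b` and
`b ≠ 0`: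
`‖b − G α⁽¹⁾‖₂ / (‖G‖₂ ‖α⁽¹⁾‖₂ + ‖b‖₂) ≤ ‖Lᵀ (D + L)⁻¹‖₂`. -/
theorem gauss_seidel_one_sweep_backward_error
    (s : ℕ) (hs : 0 < s)
    (G : Matrix (Fin s) (Fin s) ℝ) (hSymm : G.IsSymm)
    (D : Matrix (Fin s) (Fin s) ℝ) (hD : D = Matrix.diagonal fun i => G i i)
    (L : Matrix (Fin s) (Fin s) ℝ)
    (hL : L = Matrix.of fun i j => if j < i then G i j else 0)
    (hdecomp : G = D + L + Lᵀ)
    (hinv : IsUnit (D + L))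
    (b : Fin s → ℝ) (hb : b ≠ 0) (α1 : Fin s → ℝ)
    (hα1 : α1 = (D + L)⁻¹.mulVec b) :
    Real.sqrt (∑ i, (b i - G.mulVec α1 i) ^ 2) /
        (l2OpNorm G * Real.sqrt (∑ i, (α1 i) ^ 2) + Real.sqrt (∑ i, (b i) ^ 2)) ≤
      l2OpNorm (Lᵀ * (D + L)⁻¹) := by
  have hdet : IsUnit (D + L).det := (Matrix.isUnit_iff_isUnit_det _).mp hinv
  have hDL : (D + L) * (D + L)⁻¹ = 1 := Matrix.mul_nonsing_inv _ hdet
  -- residual identity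
  have hres : (fun i => b i - G.mulVec α1 i) = -(Lᵀ * (D + L)⁻¹).mulVec b := by
    funext i
    have : G.mulVec α1 = b + (Lᵀ * (D + L)⁻¹).mulVec b := by
      rw [hα1, hdecomp, Matrix.mulVec_mulVec]
      have : (D + L + Lᵀ) * (D + L)⁻¹ = 1 + Lᵀ * (D + L)⁻¹ := by
        rw [Matrix.add_mul, hDL]
      rw [this, Matrix.add_mulVec, Matrix.one_mulVec]
    simp [this]
  set M := Lᵀ * (D + L)⁻¹
  have hnum : Real.sqrt (∑ i, (b i - G.mulVec α1 i) ^ 2) ≤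
      l2OpNorm M * Real.sqrt (∑ i, (b i) ^ 2) := by
    have h1 : ∀ i, (b i - G.mulVec α1 i) ^ 2 = ((M.mulVec b) i) ^ 2 := by
      intro i
      have := congrFun hres i
      simp only [Pi.neg_apply] at this
      rw [this, neg_sq]
    rw [Finset.sum_congr rfl fun i _ => h1 i, sqrt_sum_sq_eq_norm,
      sqrt_sum_sq_eq_norm]
    exact mulVec_norm_le M b
  have hbpos : 0 < Real.sqrt (∑ i, (b i) ^ 2) := by
    rw [sqrt_sum_sq_eq_norm]
    simpa [norm_pos_iff] using hb
  have hM0 : 0 ≤ l2OpNorm M := norm_nonneg _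
  have hden : Real.sqrt (∑ i, (b i) ^ 2) ≤
      l2OpNorm G * Real.sqrt (∑ i, (α1 i) ^ 2) + Real.sqrt (∑ i, (b i) ^ 2) := by
    have : 0 ≤ l2OpNorm G * Real.sqrt (∑ i, (α1 i) ^ 2) :=
      mul_nonneg (norm_nonneg _) (Real.sqrt_nonneg _)
    linarith
  calc Real.sqrt (∑ i, (b i - G.mulVec α1 i) ^ 2) /
        (l2OpNorm G * Real.sqrt (∑ i, (α1 i) ^ 2) + Real.sqrt (∑ i, (b i) ^ 2))
      ≤ (l2OpNorm M * Real.sqrt (∑ i, (b i) ^ 2)) / Real.sqrt (∑ i, (b i) ^ 2) := by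
        apply div_le_div₀ (mul_nonneg hM0 hbpos.le) hnum hbpos hden
    _ = l2OpNorm M := by field_simp
end

section
/- Let d be a positive natural number, let H be a symmetric real d×d matrix, let c ∈ ℝ^d, define f(x) = (1/2) xᵀ H x − cᵀ x, let η be a nonzero real number, and consider the exact gradient-descent sequence x_{k+1} = x_k − η ∇f(x_k) with gradients g_k = ∇f(x_k). Then for every k ≥ 0 and every positive natural number s with s − 1 ≤ k, the linear span of the s most recent gradients {g_k, g_{k−1}, …, g_{k−s+1}} equals the Krylov subspace K_s(H, g_{k−s+1}) = span{g_{k−s+1}, H g_{k−s+1}, …, H^{s−1} g_{k−s+1}}. -/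
open Matrix


lemma range_mono_fin {d : ℕ} (F : ℕ → Fin d → ℝ) {m n : ℕ} (h : m ≤ n) :
    Set.range (fun i : Fin m => F (i : ℕ)) ⊆ Set.range (fun i : Fin n => F (i : ℕ)) := by
  rintro _ ⟨i, rfl⟩
  exact ⟨⟨i, lt_of_lt_of_le i.2 h⟩, rfl⟩

lemma affine_pow_mem {d : ℕ} (A : Matrix (Fin d) (Fin d) ℝ) (a b : ℝ) (v : Fin d → ℝ) :
    ∀ j : ℕ, ((a • (1 : Matrix (Fin d) (Fin d) ℝ) + b • A) ^ j).mulVec v ∈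
      Submodule.span ℝ (Set.range fun i : Fin (j+1) => (A ^ (i : ℕ)).mulVec v) := by
  intro j
  induction j with
  | zero =>
      apply Submodule.subset_span
      exact ⟨0, by simp⟩
  | succ j ih =>
      set B := a • (1 : Matrix (Fin d) (Fin d) ℝ) + b • A with hB
      have hstep : (B ^ (j+1)).mulVec v
          = a • (B ^ j).mulVec v + b • A.mulVec ((B ^ j).mulVec v) := by
        rw [pow_succ', ← Matrix.mulVec_mulVec, hB, Matrix.add_mulVec,
          Matrix.smul_mulVec, Matrix.smul_mulVec, Matrix.one_mulVec]
      rw [hstep]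
      have hmono := Submodule.span_mono (R := ℝ)
        (range_mono_fin (fun i => (A ^ i).mulVec v) (Nat.le_succ (j+1)))
      refine Submodule.add_mem _ (Submodule.smul_mem _ _ (hmono ih)) (Submodule.smul_mem _ _ ?_)
      have : A.mulVec ((B ^ j).mulVec v) ∈
          Submodule.map A.mulVecLin
            (Submodule.span ℝ (Set.range fun i : Fin (j+1) => (A ^ (i : ℕ)).mulVec v)) :=
        ⟨_, ih, rfl⟩
      rw [Submodule.map_span] at this
      refine Submodule.span_le.mpr ?_ this
      rintro _ ⟨_, ⟨i, rfl⟩, rfl⟩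
      apply Submodule.subset_span
      refine ⟨⟨(i : ℕ) + 1, by omega⟩, ?_⟩
      simp [Matrix.mulVecLin_apply, Matrix.mulVec_mulVec, pow_succ']

lemma affine_span_le {d : ℕ} (A : Matrix (Fin d) (Fin d) ℝ) (a b : ℝ) (v : Fin d → ℝ) (s : ℕ) :
    Submodule.span ℝ (Set.range fun j : Fin s =>
        ((a • (1 : Matrix (Fin d) (Fin d) ℝ) + b • A) ^ (j : ℕ)).mulVec v)
      ≤ Submodule.span ℝ (Set.range fun j : Fin s => (A ^ (j : ℕ)).mulVec v) := by
  refine Submodule.span_le.mpr ?_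
  rintro _ ⟨j, rfl⟩
  have h := affine_pow_mem A a b v j
  have hmono := Submodule.span_mono (R := ℝ)
    (range_mono_fin (fun i => (A ^ i).mulVec v) (by omega : (j : ℕ) + 1 ≤ s))
  exact hmono h

lemma affine_span_eq {d : ℕ} (A : Matrix (Fin d) (Fin d) ℝ) (a b : ℝ) (hb : b ≠ 0)
    (v : Fin d → ℝ) (s : ℕ) :
    Submodule.span ℝ (Set.range fun j : Fin s =>
        ((a • (1 : Matrix (Fin d) (Fin d) ℝ) + b • A) ^ (j : ℕ)).mulVec v)
      = Submodule.span ℝ (Set.range fun j : Fin s => (A ^ (j : ℕ)).mulVec v) := by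
  refine le_antisymm (affine_span_le A a b v s) ?_
  have key : A = (-a * b⁻¹) • (1 : Matrix (Fin d) (Fin d) ℝ)
      + b⁻¹ • (a • (1 : Matrix (Fin d) (Fin d) ℝ) + b • A) := by
    rw [smul_add, smul_smul, smul_smul, inv_mul_cancel₀ hb, one_smul]
    rw [← add_assoc, ← add_smul]
    ring_nf
    simp
  calc Submodule.span ℝ (Set.range fun j : Fin s => (A ^ (j : ℕ)).mulVec v)
      = Submodule.span ℝ (Set.range fun j : Fin s =>
          (((-a * b⁻¹) • (1 : Matrix (Fin d) (Fin d) ℝ)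
            + b⁻¹ • (a • (1 : Matrix (Fin d) (Fin d) ℝ) + b • A)) ^ (j : ℕ)).mulVec v) := by
        rw [← key]
    _ ≤ _ := affine_span_le _ _ _ v s

/-- Proposition 3.1 (quadratic case): for exact gradient descent on
`f(x) = ½ xᵀHx − cᵀx` with symmetric `H` and nonzero step `η`, the span of the
`s` most recent gradients `{gₖ, g_{k−1}, …, g_{k−s+1}}` equals the Krylov
subspace `K_s(H, g_{k−s+1}) = span{g_{k−s+1}, H g_{k−s+1}, …, H^{s−1} g_{k−s+1}}`. -/
theorem recent_gradients_span_krylov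
    (d : ℕ) (hd : 0 < d)
    (H : Matrix (Fin d) (Fin d) ℝ) (hH : H.IsSymm)
    (c : Fin d → ℝ)
    (f : (Fin d → ℝ) → ℝ)
    (hf : f = fun x => (1 / 2) * (x ⬝ᵥ H.mulVec x) - c ⬝ᵥ x)
    (η : ℝ) (hη : η ≠ 0)
    (x g : ℕ → Fin d → ℝ)
    (hg : ∀ k, g k = H.mulVec (x k) - c)
    (hx : ∀ k, x (k + 1) = x k - η • g k)
    (k : ℕ) (s : ℕ) (hs : 0 < s) (hsk : s - 1 ≤ k) :
    Submodule.span ℝ (Set.range fun j : Fin s => g (k - (j : ℕ)))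
      = Submodule.span ℝ (Set.range fun j : Fin s =>
          (H ^ (j : ℕ)).mulVec (g (k - (s - 1)))) := by
  set B : Matrix (Fin d) (Fin d) ℝ := (1 : ℝ) • 1 + (-η) • H with hBdef
  have grec : ∀ m, g (m + 1) = B.mulVec (g m) := by
    intro m
    rw [hg (m+1), hx m, hBdef, Matrix.add_mulVec, Matrix.smul_mulVec,
      Matrix.smul_mulVec, Matrix.one_mulVec, hg m]
    rw [Matrix.mulVec_sub, Matrix.mulVec_smul]
    module
  have gpow : ∀ m i : ℕ, g (m + i) = (B ^ i).mulVec (g m) := by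
    intro m i
    induction i with
    | zero => simp [Matrix.one_mulVec]
    | succ i ih =>
        rw [← Nat.add_assoc, grec, ih, Matrix.mulVec_mulVec, ← pow_succ']
  set m := k - (s - 1) with hm
  have hgen : (fun j : Fin s => g (k - (j : ℕ)))
      = (fun j : Fin s => (B ^ (j : ℕ)).mulVec (g m)) ∘ Fin.rev := by
    funext j
    have hj : (j : ℕ) < s := j.2
    have h1 : k - (j : ℕ) = m + (s - 1 - (j : ℕ)) := by omega
    have h2 : ((Fin.rev j : Fin s) : ℕ) = s - 1 - (j : ℕ) := by
      simp [Fin.rev]; omega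
    rw [h1, gpow]
    have : s - 1 - (j : ℕ) = s - ((j:ℕ) + 1) := by omega
    simp [Function.comp, h2, this]
  rw [hgen, Set.range_comp, Fin.rev_surjective.range_eq, Set.image_univ]
  have := affine_span_eq H 1 (-η) (neg_ne_zero.mpr hη) (g m) s
  rw [← hBdef] at this
  exact this
end
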